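/- arXiv:2204.08403 — 2 statements merged into one kernel-verified Lean document; each statement's English description precedes it below -/
import Mathlib

section
/- Convergence of the iteration errors in the degenerate case c₀ = 0: suppose (a_i)_{i≥0}, (b_i)_{i≥0} are sequences of nonnegative reals with a_i ≤ a_{i-1} for all i ≥ 1, with 2μ·b_i² + (1/λ)·a_i² ≤ (1/λ)·a_{i-1}·a_i for all i ≥ 1 (μ, λ > 0), and with a_i ≤ M·b_i for some constant M > 0 and all i. Then a_i → 0 and b_i → 0 as i → ∞. -/
/-!
Since `(a_i)` is non-increasing and nonnegative it converges, so the increments `a_{i-1} - a_i`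
tend to zero. The energy inequality rearranges to `2μ b_i² ≤ (1/λ) a_i (a_{i-1} - a_i)`,
whose right-hand side therefore tends to zero; hence `b_i → 0`, and then `0 ≤ a_i ≤ M b_i`
gives `a_i → 0`.
-/

open Filter

theorem Filter.Tendsto.mul_sub_succ {R : Type*} [Ring R] [TopologicalSpace R] [IsTopologicalRing R]
    {a : ℕ → R} {s : R} (h : Tendsto a atTop (nhds s)) :
    Tendsto (fun n => a (n + 1) * (a n - a (n + 1))) atTop (nhds 0) := by
  have hsucc : Tendsto (fun n => a (n + 1)) atTop (nhds s) := h.comp (tendsto_add_atTop_nat 1)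
  simpa using hsucc.mul (h.sub hsucc)

theorem tendsto_zero_of_sq_le {b r : ℕ → ℝ} (hr : Tendsto r atTop (nhds 0))
    (hle : ∀ n, b n ^ 2 ≤ r n) : Tendsto b atTop (nhds 0) := by
  refine squeeze_zero_norm (fun n => ?_) (by simpa using hr.sqrt)
  rw [Real.norm_eq_abs, ← Real.sqrt_sq_eq_abs]
  exact Real.sqrt_le_sqrt (hle n)

theorem sq_le_of_energy_le {μ c x y w : ℝ} (hμ : 0 < μ)
    (h : 2 * μ * y ^ 2 + c * x ^ 2 ≤ c * w * x) : y ^ 2 ≤ c * (x * (w - x)) / (2 * μ) := by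
  rw [le_div_iff₀ (by positivity)]
  linarith

theorem iteration_errors_tendsto_zero_degenerate_general
    (μ lam M : ℝ) (hμ : 0 < μ)
    (a b : ℕ → ℝ) (ha : ∀ i, 0 ≤ a i)
    (hmono : ∀ i : ℕ, 1 ≤ i → a i ≤ a (i - 1))
    (henergy : ∀ i : ℕ, 1 ≤ i →
      2 * μ * (b i) ^ 2 + (1 / lam) * (a i) ^ 2 ≤ (1 / lam) * a (i - 1) * a i)
    (hinfsup : ∀ i, a i ≤ M * b i) :
    Tendsto a atTop (nhds 0) ∧ Tendsto b atTop (nhds 0) := by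
  have hanti : Antitone a :=
    antitone_nat_of_succ_le fun n => by simpa using hmono (n + 1) n.succ_pos
  have ha_conv : Tendsto a atTop (nhds (⨅ i, a i)) :=
    tendsto_atTop_ciInf hanti ⟨0, by rintro _ ⟨i, rfl⟩; exact ha i⟩
  have hb : Tendsto b atTop (nhds 0) := by
    rw [← tendsto_add_atTop_iff_nat 1]
    refine tendsto_zero_of_sq_le
      (r := fun n => 1 / lam * (a (n + 1) * (a n - a (n + 1))) / (2 * μ))
      (by simpa using (ha_conv.mul_sub_succ.const_mul (1 / lam)).div_const (2 * μ)) fun n => ?_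
    exact sq_le_of_energy_le hμ (by simpa using henergy (n + 1) n.succ_pos)
  exact ⟨squeeze_zero ha hinfsup (by simpa using hb.const_mul M), hb⟩

/-- Convergence of the iteration errors in the degenerate case `c₀ = 0`:
if `(a_i)`, `(b_i)` are nonnegative, `(a_i)` is non-increasing,
`2μ b_i² + (1/λ) a_i² ≤ (1/λ) a_{i-1} a_i` for `i ≥ 1`, and `a_i ≤ M b_i`,
then `a_i → 0` and `b_i → 0`. -/
theorem iteration_errors_tendsto_zero_degenerate
    (μ lam M : ℝ) (hμ : 0 < μ) (hlam : 0 < lam) (hM : 0 < M)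
    (a b : ℕ → ℝ) (ha : ∀ i, 0 ≤ a i) (hb : ∀ i, 0 ≤ b i)
    (hmono : ∀ i : ℕ, 1 ≤ i → a i ≤ a (i - 1))
    (henergy : ∀ i : ℕ, 1 ≤ i →
      2 * μ * (b i) ^ 2 + (1 / lam) * (a i) ^ 2 ≤ (1 / lam) * a (i - 1) * a i)
    (hinfsup : ∀ i, a i ≤ M * b i) :
    Tendsto a atTop (nhds 0) ∧ Tendsto b atTop (nhds 0) :=
  iteration_errors_tendsto_zero_degenerate_general μ lam M hμ a b ha hmono henergy hinfsup
end

section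
/- Energy law for the continuous three-field Biot system (formal version): suppose differentiable functions of time u(t) ∈ V, ξ(t) ∈ W, p(t) ∈ M satisfy the three variational equations 2μ(ε(u), ε(v)) − (ξ, div v) = F(v) for all v; (div u_t, φ) + (1/λ)(ξ_t, φ) − (α/λ)(p_t, φ) = 0 for all φ; and ((c₀ + α²/λ)p_t − (α/λ)ξ_t, ψ) + K(∇p, ∇ψ) = G(ψ) for all ψ, where F and G are fixed bounded linear functionals. Then d/dt E(t) + K‖∇p‖² = G(p), where E(t) = μ‖ε(u)‖² + (1/(2λ))‖αp − ξ‖² + (c₀/2)‖p‖² − F(u). -/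
open RealInnerProductSpace

/-! Differentiating the energy gives `2μ(ε u, ε u') + (1/λ)(αp − ξ, αp' − ξ') + c₀(p, p') − F(u')`.
Testing the first equation with `u'`, the second with `ξ` and the third with `p` and adding,
the coupling terms `(ξ, div u')` cancel, and the identity
`(αp' − ξ', αp − ξ) = α²(p', p) − α(ξ', p) − α(p', ξ) + (ξ', ξ)` collects the remaining
terms into exactly that derivative, with right-hand side `G(p) − K‖∇p‖²`. -/

section

variable {V W X G' : Type*}
  [NormedAddCommGroup V] [NormedSpace ℝ V]
  [NormedAddCommGroup W] [InnerProductSpace ℝ W]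
  [NormedAddCommGroup X] [InnerProductSpace ℝ X]
  [NormedAddCommGroup G'] [InnerProductSpace ℝ G']

theorem real_inner_smul_sub_smul_sub (α : ℝ) (a a' b b' : W) :
    ⟪α • a' - b', α • a - b⟫ = α ^ 2 * ⟪a', a⟫ - α * ⟪b', a⟫ - α * ⟪a', b⟫ + ⟪b', b⟫ := by
  simp only [inner_sub_left, inner_sub_right, real_inner_smul_left, real_inner_smul_right]
  ring

noncomputable def biotEnergy (μ lam α c₀ : ℝ) (ε : V →ₗ[ℝ] X) (F : V →L[ℝ] ℝ)
    (u : V) (ξ p : W) : ℝ :=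
  μ * ‖ε u‖ ^ 2 + (1 / (2 * lam)) * ‖α • p - ξ‖ ^ 2 + (c₀ / 2) * ‖p‖ ^ 2 - F u

theorem hasDerivAt_biotEnergy (μ lam α c₀ : ℝ) (ε : V →ₗ[ℝ] X) (F : V →L[ℝ] ℝ)
    {u : ℝ → V} {ξ p : ℝ → W} {u' : V} {ξ' p' : W} {t : ℝ}
    (hu : HasDerivAt u u' t) (hξ : HasDerivAt ξ ξ' t) (hp : HasDerivAt p p' t)
    (hεu : HasDerivAt (fun s => ε (u s)) (ε u') t) :
    HasDerivAt (fun s => biotEnergy μ lam α c₀ ε F (u s) (ξ s) (p s))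
      (2 * μ * ⟪ε (u t), ε u'⟫ + (1 / lam) * ⟪α • p t - ξ t, α • p' - ξ'⟫
        + c₀ * ⟪p t, p'⟫ - F u') t := by
  have hF : HasDerivAt (fun s => F (u s)) (F u') t := F.hasFDerivAt.comp_hasDerivAt t hu
  have hw : HasDerivAt (fun s => α • p s - ξ s) (α • p' - ξ') t := (hp.const_smul α).sub hξ
  exact ((((hεu.norm_sq.const_mul μ).add (hw.norm_sq.const_mul (1 / (2 * lam)))).add
    (hp.norm_sq.const_mul (c₀ / 2))).sub hF).congr_deriv (by ring)

theorem biot_power_balance (μ lam α K c₀ : ℝ) (ε : V →ₗ[ℝ] X) (dv : V →ₗ[ℝ] W)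
    (gr : W →ₗ[ℝ] G') (F : V →L[ℝ] ℝ) (Gf : W →L[ℝ] ℝ) {u u' : V} {ξ p ξ' p' : W}
    (h1 : 2 * μ * ⟪ε u, ε u'⟫ - ⟪ξ, dv u'⟫ = F u')
    (h2 : ⟪dv u', ξ⟫ + (1 / lam) * ⟪ξ', ξ⟫ - (α / lam) * ⟪p', ξ⟫ = 0)
    (h3 : ⟪(c₀ + α ^ 2 / lam) • p' - (α / lam) • ξ', p⟫ + K * ⟪gr p, gr p⟫ = Gf p) :
    2 * μ * ⟪ε u, ε u'⟫ + (1 / lam) * ⟪α • p - ξ, α • p' - ξ'⟫ + c₀ * ⟪p, p'⟫ - F u'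
      = Gf p - K * ‖gr p‖ ^ 2 := by
  rw [real_inner_comm (α • p' - ξ'), real_inner_smul_sub_smul_sub, ← real_inner_self_eq_norm_sq]
  simp only [inner_sub_left, real_inner_smul_left] at h3
  rw [real_inner_comm (dv u') ξ] at h1
  rw [real_inner_comm p' p]
  linear_combination h1 + h2 + h3

end

theorem biot_three_field_energy_law_general
    (V W X G' : Type*)
    [NormedAddCommGroup V] [NormedSpace ℝ V]
    [NormedAddCommGroup W] [InnerProductSpace ℝ W]
    [NormedAddCommGroup X] [InnerProductSpace ℝ X]
    [NormedAddCommGroup G'] [InnerProductSpace ℝ G']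
    (μ lam α K c₀ : ℝ)
    (ε : V →ₗ[ℝ] X)        -- symmetric gradient
    (dv : V →ₗ[ℝ] W)       -- divergence
    (gr : W →ₗ[ℝ] G')      -- gradient (on the pressure space)
    (F : V →L[ℝ] ℝ) (Gf : W →L[ℝ] ℝ)  -- fixed bounded linear functionals
    (u : ℝ → V) (ξ p : ℝ → W) (u' : ℝ → V) (ξ' p' : ℝ → W)
    (hu : ∀ t, HasDerivAt u (u' t) t)
    (hξ : ∀ t, HasDerivAt ξ (ξ' t) t)
    (hp : ∀ t, HasDerivAt p (p' t) t)
    (hεu : ∀ t, HasDerivAt (fun s => ε (u s)) (ε (u' t)) t)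
    (heq1 : ∀ t, ∀ v : V, 2 * μ * ⟪ε (u t), ε v⟫ - ⟪ξ t, dv v⟫ = F v)
    (heq2 : ∀ t, ∀ φ : W,
      ⟪dv (u' t), φ⟫ + (1 / lam) * ⟪ξ' t, φ⟫ - (α / lam) * ⟪p' t, φ⟫ = 0)
    (heq3 : ∀ t, ∀ ψ : W,
      ⟪(c₀ + α ^ 2 / lam) • p' t - (α / lam) • ξ' t, ψ⟫
        + K * ⟪gr (p t), gr ψ⟫ = Gf ψ) :
    ∀ t : ℝ, HasDerivAt
      (fun s => μ * ‖ε (u s)‖ ^ 2 + (1 / (2 * lam)) * ‖α • p s - ξ s‖ ^ 2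
        + (c₀ / 2) * ‖p s‖ ^ 2 - F (u s))
      (Gf (p t) - K * ‖gr (p t)‖ ^ 2) t := by
  intro t
  rw [← biot_power_balance μ lam α K c₀ ε dv gr F Gf (heq1 t (u' t)) (heq2 t (ξ t))
    (heq3 t (p t))]
  exact hasDerivAt_biotEnergy μ lam α c₀ ε F (hu t) (hξ t) (hp t) (hεu t)

/-- Energy law for the continuous three-field Biot system (abstract version):
if differentiable curves `u(t) ∈ V`, `ξ(t), p(t) ∈ W` satisfy the three
variational equations
`2μ(ε u, ε v) − (ξ, div v) = F(v)`,
`(div u', φ) + (1/λ)(ξ', φ) − (α/λ)(p', φ) = 0`, and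
`((c₀ + α²/λ)p' − (α/λ)ξ', ψ) + K(∇p, ∇ψ) = G(ψ)`,
then `d/dt E(t) = G(p(t)) − K‖∇p(t)‖²`, where
`E(t) = μ‖ε u‖² + (1/(2λ))‖αp − ξ‖² + (c₀/2)‖p‖² − F(u)`. -/
theorem biot_three_field_energy_law
    (V W X G' : Type*)
    [NormedAddCommGroup V] [NormedSpace ℝ V]
    [NormedAddCommGroup W] [InnerProductSpace ℝ W]
    [NormedAddCommGroup X] [InnerProductSpace ℝ X]
    [NormedAddCommGroup G'] [InnerProductSpace ℝ G']
    (μ lam α K c₀ : ℝ) (hμ : 0 < μ) (hlam : 0 < lam) (hα : 0 < α)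
    (hK : 0 < K) (hc₀ : 0 ≤ c₀)
    (ε : V →ₗ[ℝ] X)        -- symmetric gradient
    (dv : V →ₗ[ℝ] W)       -- divergence
    (gr : W →ₗ[ℝ] G')      -- gradient (on the pressure space)
    (F : V →L[ℝ] ℝ) (Gf : W →L[ℝ] ℝ)  -- fixed bounded linear functionals
    (u : ℝ → V) (ξ p : ℝ → W) (u' : ℝ → V) (ξ' p' : ℝ → W)
    (hu : ∀ t, HasDerivAt u (u' t) t)
    (hξ : ∀ t, HasDerivAt ξ (ξ' t) t)
    (hp : ∀ t, HasDerivAt p (p' t) t)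
    (hεu : ∀ t, HasDerivAt (fun s => ε (u s)) (ε (u' t)) t)
    (heq1 : ∀ t, ∀ v : V, 2 * μ * ⟪ε (u t), ε v⟫ - ⟪ξ t, dv v⟫ = F v)
    (heq2 : ∀ t, ∀ φ : W,
      ⟪dv (u' t), φ⟫ + (1 / lam) * ⟪ξ' t, φ⟫ - (α / lam) * ⟪p' t, φ⟫ = 0)
    (heq3 : ∀ t, ∀ ψ : W,
      ⟪(c₀ + α ^ 2 / lam) • p' t - (α / lam) • ξ' t, ψ⟫
        + K * ⟪gr (p t), gr ψ⟫ = Gf ψ) :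
    ∀ t : ℝ, HasDerivAt
      (fun s => μ * ‖ε (u s)‖ ^ 2 + (1 / (2 * lam)) * ‖α • p s - ξ s‖ ^ 2
        + (c₀ / 2) * ‖p s‖ ^ 2 - F (u s))
      (Gf (p t) - K * ‖gr (p t)‖ ^ 2) t :=
  biot_three_field_energy_law_general V W X G' μ lam α K c₀ ε dv gr F Gf u ξ p u' ξ' p' hu hξ hp hεu
    heq1 heq2 heq3
end
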